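/- Let G = ⟨X | R⟩ be a group presentation with exp_X(r) ≡ 0 (mod M) for every relator r, let H ≤ G, and let Γ be the Schreier graph of G with respect to H and X. Then every connected component of Γ ⊗ C_M is isomorphic, as a labeled graph, to the Schreier graph of G with respect to the subgroup H_M = {h ∈ H : exp_X(h) ≡ 0 (mod M)}. -/

import Mathlib

/-- An oriented (multi)graph: vertices, edges, initial and terminal maps. -/
structure OGraph where
  V : Type
  E : Type
  ι : E → V
  τ : E → V

namespace OGraph

/-- Tensor product of oriented graphs. -/
def tensor (G H : OGraph) : OGraph where
  V := G.V × H.V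
  E := G.E × H.E
  ι e := (G.ι e.1, H.ι e.2)
  τ e := (G.τ e.1, H.τ e.2)

/-- Isomorphism of oriented graphs. -/
structure Iso (G H : OGraph) where
  fV : G.V ≃ H.V
  fE : G.E ≃ H.E
  hι : ∀ e, H.ι (fE e) = fV (G.ι e)
  hτ : ∀ e, H.τ (fE e) = fV (G.τ e)

/-- Weak adjacency. -/
def Adj (G : OGraph) (u v : G.V) : Prop :=
  (∃ e, G.ι e = u ∧ G.τ e = v) ∨ (∃ e, G.ι e = v ∧ G.τ e = u)

/-- Weak reachability. -/
def Reach (G : OGraph) : G.V → G.V → Prop := Relation.ReflTransGen G.Adj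

/-- The connected component of a vertex. -/
def component (G : OGraph) (v : G.V) : OGraph where
  V := {w // G.Reach v w}
  E := {e // G.Reach v (G.ι e)}
  ι e := ⟨G.ι e.1, e.2⟩
  τ e := ⟨G.τ e.1, e.2.tail (Or.inl ⟨e.1, rfl, rfl⟩)⟩

end OGraph

/-- The oriented cycle of length `M` (`M = 0` gives the oriented line, i.e. `M = ∞`). -/
@[reducible] def cycle (M : ℕ) : OGraph where
  V := ZMod M
  E := ZMod M
  ι i := i
  τ i := i + 1

/-- An oriented graph whose edges carry labels in `X`. -/
structure LGraph (X : Type) extends OGraph where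
  lab : E → X

/-- Strong (label-preserving) isomorphism of labeled oriented graphs. -/
structure LIso {X : Type} (G H : LGraph X) extends OGraph.Iso G.toOGraph H.toOGraph where
  hlab : ∀ e, H.lab (fE e) = G.lab e

/-- Tensor product of a labeled graph with the cycle `C_M`, the labels being inherited
from the first factor. -/
def LGraph.tensorC {X : Type} (G : LGraph X) (M : ℕ) : LGraph X where
  toOGraph := G.toOGraph.tensor (cycle M)
  lab e := G.lab e.1

/-- The connected component of a vertex of a labeled graph. -/
def LGraph.component {X : Type} (G : LGraph X) (v : G.V) : LGraph X where
  toOGraph := G.toOGraph.component v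
  lab e := G.lab e.1

/-- The labeled oriented Cayley graph of a group `G` with generators indexed by `f : X → G`:
an edge labeled `x` from `g` to `g * f x`. -/
def cayley (G : Type) [Group G] {X : Type} (f : X → G) : LGraph X where
  V := G
  E := G × X
  ι e := e.1
  τ e := e.1 * f e.2
  lab e := e.2

/-- The labeled oriented Schreier graph of `G` with respect to a subgroup `H` and
generators `f : X → G`: vertices are right cosets `Hg`, with an edge labeled `x`
from `Hg` to `Hg·(f x)`. -/
def schreier (G : Type) [Group G] (H : Subgroup G) {X : Type} (f : X → G) : LGraph X where
  V := Quotient (QuotientGroup.rightRel H)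
  E := Quotient (QuotientGroup.rightRel H) × X
  ι e := e.1
  τ e := Quotient.map (fun g => g * f e.2)
    (fun a b h => by
      have h' := QuotientGroup.rightRel_apply.mp h
      exact QuotientGroup.rightRel_apply.mpr (by simpa [mul_assoc] using h')) e.1
  lab e := e.2

/-
Fix a base vertex `(Hg₀, i₀)` of `Γ ⊗ C_M` and put `c = i₀ - exp(g₀)`. The map
`H_M g ↦ (Hg, c + exp g)` is well defined and injective, since `H_M g = H_M g'` exactly when
`Hg = Hg'` and `exp g = exp g'`. It sends the `x`-edge at `H_M g` to the `x`-edge at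
`(Hg, c + exp g)`, and every edge of `Γ ⊗ C_M` entering or leaving its image comes from an edge
of the Schreier graph of `H_M`. As that graph is connected, its image is exactly the component
of `(Hg₀, i₀)`.
-/

theorem OGraph.Reach.symm {G : OGraph} {u v : G.V} (h : G.Reach u v) : G.Reach v u :=
  (@Relation.ReflTransGen.stdSymm _ G.Adj ⟨fun _ _ => Or.symm⟩).symm _ _ h

namespace LIso

variable {X : Type} {G H : LGraph X}

def symm (σ : LIso G H) : LIso H G where
  fV := σ.fV.symm
  fE := σ.fE.symm
  hι e := σ.fV.injective (by rw [← σ.hι, Equiv.apply_symm_apply, Equiv.apply_symm_apply])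
  hτ e := σ.fV.injective (by rw [← σ.hτ, Equiv.apply_symm_apply, Equiv.apply_symm_apply])
  hlab e := by rw [← σ.hlab, Equiv.apply_symm_apply]

end LIso

structure LHom {X : Type} (G H : LGraph X) where
  fV : G.V → H.V
  fE : G.E → H.E
  hι : ∀ e, H.ι (fE e) = fV (G.ι e)
  hτ : ∀ e, H.τ (fE e) = fV (G.τ e)
  hlab : ∀ e, H.lab (fE e) = G.lab e

namespace LHom

open Function

variable {X : Type} {S T : LGraph X} (F : LHom S T)

theorem map_reach {u v : S.V} (h : S.Reach u v) : T.Reach (F.fV u) (F.fV v) := by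
  induction h with
  | refl => exact .refl
  | tail _ hadj ih =>
    refine ih.tail ?_
    rcases hadj with ⟨e, rfl, rfl⟩ | ⟨e, rfl, rfl⟩
    · exact Or.inl ⟨F.fE e, F.hι e, F.hτ e⟩
    · exact Or.inr ⟨F.fE e, F.hι e, F.hτ e⟩

variable {F}

theorem mem_range_fV_of_reach
    (hout : ∀ e, T.ι e ∈ Set.range F.fV → e ∈ Set.range F.fE)
    (hin : ∀ e, T.τ e ∈ Set.range F.fV → e ∈ Set.range F.fE)
    {s : S.V} {v : T.V} (h : T.Reach (F.fV s) v) : v ∈ Set.range F.fV := by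
  induction h with
  | refl => exact ⟨s, rfl⟩
  | tail _ hadj ih =>
    rcases hadj with ⟨e, rfl, rfl⟩ | ⟨e, rfl, rfl⟩
    · obtain ⟨e, rfl⟩ := hout e ih
      exact ⟨S.τ e, (F.hτ e).symm⟩
    · obtain ⟨e, rfl⟩ := hin e ih
      exact ⟨S.ι e, (F.hι e).symm⟩

noncomputable def componentIso (hV : Injective F.fV) (hE : Injective F.fE)
    (hS : ∀ u v, S.Reach u v)
    (hout : ∀ e, T.ι e ∈ Set.range F.fV → e ∈ Set.range F.fE)
    (hin : ∀ e, T.τ e ∈ Set.range F.fV → e ∈ Set.range F.fE) (s : S.V) :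
    LIso S (T.component (F.fV s)) where
  fV := Equiv.ofBijective (fun u => ⟨F.fV u, F.map_reach (hS s u)⟩) <| by
    refine ⟨fun u u' h => hV (congrArg Subtype.val h), fun ⟨v, hv⟩ => ?_⟩
    obtain ⟨u, rfl⟩ := mem_range_fV_of_reach hout hin hv
    exact ⟨u, rfl⟩
  fE := Equiv.ofBijective
      (fun e => ⟨F.fE e, by rw [F.hι]; exact F.map_reach (hS s _)⟩) <| by
    refine ⟨fun e e' h => hE (congrArg Subtype.val h), fun ⟨e, he⟩ => ?_⟩
    obtain ⟨e, rfl⟩ := hout e (mem_range_fV_of_reach hout hin he)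
    exact ⟨e, rfl⟩
  hι e := Subtype.ext (F.hι e)
  hτ e := Subtype.ext (F.hτ e)
  hlab e := F.hlab e

end LHom

open QuotientGroup Multiplicative

section Schreier

variable {X G : Type} [Group G] (f : X → G)

@[simp]
theorem schreier_τ_mk (H : Subgroup G) (g : G) (x : X) :
    (schreier G H f).τ (Quotient.mk (rightRel H) g, x) = Quotient.mk (rightRel H) (g * f x) :=
  rfl

theorem schreier_reach (hgen : Subgroup.closure (Set.range f) = ⊤) (H : Subgroup G)
    (u v : (schreier G H f).V) : (schreier G H f).Reach u v := by
  have from_one (g : G) :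
      (schreier G H f).Reach (Quotient.mk _ 1) (Quotient.mk _ g) := by
    induction (hgen ▸ Subgroup.mem_top g : g ∈ Subgroup.closure (Set.range f))
      using Subgroup.closure_induction_right with
    | one => exact .refl
    | mul_right a _ _ hy ih =>
      obtain ⟨x, rfl⟩ := hy
      exact ih.tail (Or.inl ⟨(Quotient.mk _ a, x), rfl, rfl⟩)
    | mul_inv_cancel a _ _ hy ih =>
      obtain ⟨x, rfl⟩ := hy
      refine ih.tail (Or.inr ⟨(Quotient.mk _ (a * (f x)⁻¹), x), rfl, ?_⟩)
      rw [schreier_τ_mk, inv_mul_cancel_right]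
  obtain ⟨a, rfl⟩ := Quotient.exists_rep u
  obtain ⟨b, rfl⟩ := Quotient.exists_rep v
  exact (from_one a).symm.trans (from_one b)

variable {M : ℕ} (φ : G →* Multiplicative (ZMod M)) (H : Subgroup G)

theorem mk_inf_ker_eq_iff {a b : G} :
    Quotient.mk (rightRel (H ⊓ φ.ker)) a = Quotient.mk _ b ↔
      Quotient.mk (rightRel H) a = Quotient.mk _ b ∧ φ a = φ b := by
  simp only [Quotient.eq, rightRel_apply, Subgroup.mem_inf, MonoidHom.mem_ker, map_mul,
    map_inv, mul_inv_eq_one, eq_comm (a := φ b)]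

def cosetTensorV (c : ZMod M) :
    (schreier G (H ⊓ φ.ker) f).V → ((schreier G H f).tensorC M).V :=
  Quotient.lift (fun g => (Quotient.mk (rightRel H) g, c + toAdd (φ g))) fun _ _ hab => by
    obtain ⟨hH, hφ⟩ := (mk_inf_ker_eq_iff φ H).1 (Quotient.sound hab)
    rw [hH, hφ]

@[simp]
theorem cosetTensorV_mk (c : ZMod M) (g : G) :
    cosetTensorV f φ H c (Quotient.mk _ g) = (Quotient.mk (rightRel H) g, c + toAdd (φ g)) :=
  rfl

theorem cosetTensorV_injective (c : ZMod M) : Function.Injective (cosetTensorV f φ H c) := by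
  rintro ⟨a⟩ ⟨b⟩ h
  obtain ⟨hH, hφ⟩ := Prod.mk.inj h
  exact (mk_inf_ker_eq_iff φ H).2 ⟨hH, toAdd.injective (add_left_cancel hφ)⟩

variable {f φ}

def cosetTensorHom (hφ : ∀ x, φ (f x) = ofAdd 1) (c : ZMod M) :
    LHom (schreier G (H ⊓ φ.ker) f) ((schreier G H f).tensorC M) where
  fV := cosetTensorV f φ H c
  fE e := (((cosetTensorV f φ H c e.1).1, e.2), (cosetTensorV f φ H c e.1).2)
  hι _ := rfl
  hτ := by
    rintro ⟨q, x⟩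
    obtain ⟨g, rfl⟩ := Quotient.exists_rep q
    change (Quotient.mk _ (g * f x), c + toAdd (φ g) + 1) =
      (Quotient.mk _ (g * f x), c + toAdd (φ (g * f x)))
    rw [map_mul, hφ, toAdd_mul, toAdd_ofAdd, add_assoc]
  hlab _ := rfl

section

variable (hφ : ∀ x, φ (f x) = ofAdd 1) (c : ZMod M)

theorem cosetTensorHom_fE_injective : Function.Injective (cosetTensorHom H hφ c).fE := by
  rintro ⟨q, x⟩ ⟨q', x'⟩ h
  obtain ⟨hqx, hV₂⟩ := Prod.mk.inj h
  obtain ⟨hV₁, hx⟩ := Prod.mk.inj hqx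
  exact Prod.ext (cosetTensorV_injective f φ H c (Prod.ext hV₁ hV₂)) hx

theorem cosetTensorHom_mem_range_fE_of_ι (e : ((schreier G H f).tensorC M).E)
    (he : ((schreier G H f).tensorC M).ι e ∈ Set.range (cosetTensorHom H hφ c).fV) :
    e ∈ Set.range (cosetTensorHom H hφ c).fE := by
  obtain ⟨⟨q, x⟩, i⟩ := e
  obtain ⟨s, hs⟩ := he
  exact ⟨(s, x), congrArg (fun v : Quotient (rightRel H) × ZMod M => ((v.1, x), v.2)) hs⟩

theorem cosetTensorHom_mem_range_fE_of_τ (e : ((schreier G H f).tensorC M).E)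
    (he : ((schreier G H f).tensorC M).τ e ∈ Set.range (cosetTensorHom H hφ c).fV) :
    e ∈ Set.range (cosetTensorHom H hφ c).fE := by
  obtain ⟨⟨q, x⟩, i⟩ := e
  obtain ⟨a, rfl⟩ := Quotient.exists_rep q
  obtain ⟨s, hs⟩ := he
  obtain ⟨g, rfl⟩ := Quotient.exists_rep s
  change (Quotient.mk _ g, c + toAdd (φ g)) = (Quotient.mk _ (a * f x), i + 1) at hs
  obtain ⟨hH, hi⟩ := Prod.mk.inj hs
  have hH' : Quotient.mk (rightRel H) (g * (f x)⁻¹) = Quotient.mk _ a := by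
    simpa [Quotient.eq, rightRel_apply, mul_assoc] using rightRel_apply.1 (Quotient.eq.1 hH)
  refine ⟨(Quotient.mk _ (g * (f x)⁻¹), x), ?_⟩
  simp only [cosetTensorHom, cosetTensorV_mk, hH', map_mul, map_inv, hφ, toAdd_mul, toAdd_inv,
    toAdd_ofAdd]
  congr 1
  linear_combination hi

end

theorem nonempty_liso_component_tensorC_schreier (hφ : ∀ x, φ (f x) = ofAdd 1)
    (hgen : Subgroup.closure (Set.range f) = ⊤)
    (p : ((schreier G H f).tensorC M).V) :
    Nonempty (LIso (((schreier G H f).tensorC M).component p) (schreier G (H ⊓ φ.ker) f)) := by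
  obtain ⟨q, i⟩ := p
  obtain ⟨g, rfl⟩ := Quotient.exists_rep q
  let F := cosetTensorHom H hφ (i - toAdd (φ g))
  have hp : F.fV (Quotient.mk _ g) = ((Quotient.mk _ g, i) : ((schreier G H f).tensorC M).V) :=
    congrArg _ (sub_add_cancel i _)
  rw [← hp]
  exact ⟨(F.componentIso (cosetTensorV_injective f φ H _) (cosetTensorHom_fE_injective H hφ _)
    (schreier_reach f hgen _) (cosetTensorHom_mem_range_fE_of_ι H hφ _)
    (cosetTensorHom_mem_range_fE_of_τ H hφ _) _).symm⟩

end Schreier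

/-- Let `G = ⟨X | R⟩` with every relator of total exponent ≡ 0 (mod M)
(so the total exponent mod `M` is a well-defined homomorphism `G →* ℤ/Mℤ`, namely
`PresentedGroup.toGroup h`), and let `H ≤ G`. Then every connected component of the
tensor product of the Schreier graph of `H` with `C_M` is isomorphic, as a labeled
graph, to the Schreier graph of `H_M = {h ∈ H : exp_X(h) ≡ 0 (mod M)}`. -/
theorem schreier_tensor_cycle_components {X : Type} (R : Set (FreeGroup X)) (M : ℕ)
    (h : ∀ r ∈ R, FreeGroup.lift (fun _ : X => Multiplicative.ofAdd (1 : ZMod M)) r = 1)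
    (H : Subgroup (PresentedGroup R))
    (p : ((schreier (PresentedGroup R) H (PresentedGroup.of (rels := R))).tensorC M).V) :
    Nonempty (LIso
      (((schreier (PresentedGroup R) H (PresentedGroup.of (rels := R))).tensorC M).component p)
      (schreier (PresentedGroup R) (H ⊓ (PresentedGroup.toGroup h).ker)
        (PresentedGroup.of (rels := R)))) :=
  nonempty_liso_component_tensorC_schreier H (fun _ => PresentedGroup.toGroup.of h)
    (PresentedGroup.closure_range_of R) p
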